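/- Let F : Finset α → ℝ be a monotone submodular set function on subsets of a finite ground set Ω with F(∅) = 0, and let K ≥ 1. Let G_t be the set produced by the greedy algorithm after t steps (starting from G_0 = ∅ and at each step adding an element maximizing the marginal gain). Then for every set A ⊆ Ω with |A| ≤ K and every t, F(A) - F(G_t) ≤ (1 - 1/K)^t · (F(A) - F(G_0)); in particular F(G_K) ≥ (1 - (1 - 1/K)^K) · F(A). -/

import Mathlib

/-! Submodularity bounds the gap `F A - F G` by the sum of the marginal gains at `G` of the at most
`K` elements of `A`, and each of these is at most the gain of the greedy choice. So every greedy
step closes at least a `1/K` fraction of the gap, which therefore decays like `(1 - 1/K)^t`.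
Since `G 0 = ∅` and `F ∅ = 0`, taking `t = K` gives the `1 - (1 - 1/K)^K` approximation. -/

section Submodular

variable {α : Type*} [DecidableEq α] {F : Finset α → ℝ}
  (hmono : ∀ A B : Finset α, A ⊆ B → F A ≤ F B)
  (hsub : ∀ A B : Finset α, A ⊆ B → ∀ c ∉ B, F (insert c B) - F B ≤ F (insert c A) - F A)
include hmono hsub

theorem union_sub_le_sum_insert_sub (S B : Finset α) :
    F (S ∪ B) - F B ≤ ∑ a ∈ S, (F (insert a B) - F B) := by
  induction S using Finset.induction_on with
  | empty => simp
  | @insert a S ha ih =>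
    have hgain : F (insert a (S ∪ B)) - F (S ∪ B) ≤ F (insert a B) - F B := by
      by_cases haSB : a ∈ S ∪ B
      · rw [Finset.insert_eq_self.mpr haSB, sub_self, sub_nonneg]
        exact hmono B (insert a B) (Finset.subset_insert a B)
      · exact hsub B (S ∪ B) Finset.subset_union_right a haSB
    rw [Finset.sum_insert ha, Finset.insert_union]
    linarith

theorem sub_le_card_mul_of_insert_sub_le {A B : Finset α} {g : ℝ}
    (hg : ∀ a ∈ A, F (insert a B) - F B ≤ g) :
    F A - F B ≤ A.card * g := by
  calc F A - F B ≤ F (A ∪ B) - F B := by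
        gcongr; exact hmono A (A ∪ B) Finset.subset_union_left
    _ ≤ ∑ a ∈ A, (F (insert a B) - F B) := union_sub_le_sum_insert_sub hmono hsub A B
    _ ≤ ∑ _a ∈ A, g := Finset.sum_le_sum hg
    _ = A.card * g := by rw [Finset.sum_const, nsmul_eq_mul]

theorem sub_insert_le_of_forall_insert_sub_le {A B : Finset α} {e : α} {K : ℕ} (hK : 1 ≤ K)
    (hA : A.card ≤ K) (hmax : ∀ a ∈ A, F (insert a B) - F B ≤ F (insert e B) - F B) :
    F A - F (insert e B) ≤ (1 - 1 / (K : ℝ)) * (F A - F B) := by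
  set g := F (insert e B) - F B
  have hKpos : (0 : ℝ) < K := Nat.cast_pos.2 hK
  have hg : 0 ≤ g := sub_nonneg.2 (hmono B (insert e B) (Finset.subset_insert e B))
  have hgap : F A - F B ≤ K * g :=
    (sub_le_card_mul_of_insert_sub_le hmono hsub hmax).trans (by gcongr)
  have hfrac : (F A - F B) / K ≤ g := (div_le_iff₀ hKpos).2 (by linarith)
  calc F A - F (insert e B) = (F A - F B) - g := by ring
    _ ≤ (F A - F B) - (F A - F B) / K := by linarith
    _ = (1 - 1 / (K : ℝ)) * (F A - F B) := by ring

end Submodular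

theorem stmt5_general {α : Type*} [DecidableEq α] (Ω : Finset α) (F : Finset α → ℝ)
    (hF0 : F ∅ = 0)
    (hmono : ∀ A B : Finset α, A ⊆ B → F A ≤ F B)
    (hsub : ∀ A B : Finset α, A ⊆ B → ∀ c ∉ B,
      F (insert c B) - F B ≤ F (insert c A) - F A)
    (K : ℕ) (hK : 1 ≤ K)
    (G : ℕ → Finset α) (hG0 : G 0 = ∅)
    (hGstep : ∀ t, ∃ e ∈ Ω, G (t + 1) = insert e (G t) ∧
      ∀ e' ∈ Ω, F (insert e' (G t)) - F (G t) ≤ F (insert e (G t)) - F (G t)) :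
    ∀ A : Finset α, A ⊆ Ω → A.card ≤ K →
      (∀ t : ℕ, F A - F (G t) ≤ (1 - 1 / (K : ℝ)) ^ t * (F A - F (G 0))) ∧
      (1 - (1 - 1 / (K : ℝ)) ^ K) * F A ≤ F (G K) := by
  intro A hAΩ hAcard
  have hc : (0 : ℝ) ≤ 1 - 1 / (K : ℝ) :=
    sub_nonneg.2 <| (div_le_one (Nat.cast_pos.2 hK)).2 (by exact_mod_cast hK)
  have hcontract : ∀ t, F A - F (G (t + 1)) ≤ (1 - 1 / (K : ℝ)) * (F A - F (G t)) := by
    intro t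
    obtain ⟨e, -, hstep, hmax⟩ := hGstep t
    rw [hstep]
    exact sub_insert_le_of_forall_insert_sub_le hmono hsub hK hAcard fun a ha => hmax a (hAΩ ha)
  have hgeom : ∀ t : ℕ, F A - F (G t) ≤ (1 - 1 / (K : ℝ)) ^ t * (F A - F (G 0)) :=
    fun t => le_geom (u := fun t => F A - F (G t)) hc t fun k _ => hcontract k
  refine ⟨hgeom, ?_⟩
  have hK_steps := hgeom K
  rw [hG0, hF0, sub_zero] at hK_steps
  linarith

theorem stmt5 {α : Type*} [DecidableEq α] (Ω : Finset α) (F : Finset α → ℝ)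
    (hF0 : F ∅ = 0)
    (hmono : ∀ A B : Finset α, A ⊆ B → F A ≤ F B)
    (hsub : ∀ A B : Finset α, A ⊆ B → ∀ c ∉ B,
      F (insert c B) - F B ≤ F (insert c A) - F A)
    (K : ℕ) (hK : 1 ≤ K)
    (G : ℕ → Finset α) (hG0 : G 0 = ∅)
    (hGsub : ∀ t, G t ⊆ Ω)
    (hGstep : ∀ t, ∃ e ∈ Ω, G (t + 1) = insert e (G t) ∧
      ∀ e' ∈ Ω, F (insert e' (G t)) - F (G t) ≤ F (insert e (G t)) - F (G t)) :
    ∀ A : Finset α, A ⊆ Ω → A.card ≤ K →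
      (∀ t : ℕ, F A - F (G t) ≤ (1 - 1 / (K : ℝ)) ^ t * (F A - F (G 0))) ∧
      (1 - (1 - 1 / (K : ℝ)) ^ K) * F A ≤ F (G K) :=
  stmt5_general Ω F hF0 hmono hsub K hK G hG0 hGstep
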